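/- arXiv:cs/0312014 — 3 statements merged into one kernel-verified Lean document; each statement's English description precedes it below -/
import Mathlib

section
/- Every bounded 3-valued structure S is FO-identifiable, with node formulas node^S_{u_i}(w) defined as the conjunction over all unary predicates p of the characteristic formula p^{ι^S(p)(u_i)}(w). -/
/-!
Common framework: 2-valued and 3-valued logical structures over a relational
vocabulary with a designated binary equality predicate, embedding, first-order
formulas with transitive closure and their Tarskian semantics, characteristic
formulas, canonical abstraction.
-/

namespace HeapAbs

/-- The three truth values 0, 1/2, 1. -/
inductive TV : Type
  | zero
  | half
  | one
  deriving DecidableEq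

/-- Information order on truth values: `l1 ⊑ l2` iff `l1 = l2` or `l2 = 1/2`. -/
def TV.le (a b : TV) : Prop := a = b ∨ b = TV.half

/-- `v` is the least upper bound (join) of the set `A` in the information order. -/
def TV.IsJoin (A : Set TV) (v : TV) : Prop :=
  (∀ a ∈ A, TV.le a v) ∧ ∀ w, (∀ a ∈ A, TV.le a w) → TV.le v w

/-- A (relational) vocabulary: a set of predicate symbols with arities and a
designated binary equality symbol. -/
structure Voc : Type 1 where
  rel : Type
  ar : rel → ℕ
  eqr : rel
  eq_ar : ar eqr = 2

/-- The pair `(u, v)` as a tuple (used for binary predicates). -/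
def pair {α : Type _} {n : ℕ} (u v : α) : Fin n → α :=
  fun i => if (i : ℕ) = 0 then u else v

/-- A 3-valued logical structure over the vocabulary `σ`. -/
structure Str3 (σ : Voc) : Type 1 where
  U : Type
  ι : (r : σ.rel) → (Fin (σ.ar r) → U) → TV
  eq_refl : ∀ u : U, ι σ.eqr (pair u u) ≠ TV.zero
  eq_ne : ∀ u v : U, u ≠ v → ι σ.eqr (pair u v) = TV.zero

/-- A 2-valued logical structure over `σ`: all predicate values are definite and
the equality symbol is interpreted as true equality. -/
structure Str2 (σ : Voc) : Type 1 where
  U : Type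
  ι : (r : σ.rel) → (Fin (σ.ar r) → U) → Bool
  eq_iff : ∀ u v : U, ι σ.eqr (pair u v) = true ↔ u = v

/-- The value of a predicate of a 2-valued structure, seen as a truth value. -/
def Str2.tv {σ : Voc} (C : Str2 σ) (r : σ.rel) (t : Fin (σ.ar r) → C.U) : TV :=
  if C.ι r t then TV.one else TV.zero

/-- `f` embeds the 2-valued structure `C` into the 3-valued structure `S`:
`f` is surjective and every predicate value of `C` is ⊑ the corresponding
value of `S`. -/
def Embeds {σ : Voc} (C : Str2 σ) (S : Str3 σ) (f : C.U → S.U) : Prop :=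
  Function.Surjective f ∧
    ∀ (r : σ.rel) (t : Fin (σ.ar r) → C.U), TV.le (C.tv r t) (S.ι r (f ∘ t))

/-- First-order formulas with transitive closure over vocabulary `σ`, with
free variables drawn from `V`. -/
inductive Fml (σ : Voc) : Type → Type 1 where
  | tru {V : Type} : Fml σ V
  | atom {V : Type} (r : σ.rel) (ts : Fin (σ.ar r) → V) : Fml σ V
  | not {V : Type} : Fml σ V → Fml σ V
  | or {V : Type} : Fml σ V → Fml σ V → Fml σ V
  | ex {V : Type} : Fml σ (Option V) → Fml σ V
  | tc {V : Type} (φ : Fml σ (Option (Option V))) (a b : V) : Fml σ V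

/-- Tarskian satisfaction of a formula in a 2-valued structure under an
assignment `ρ` of the free variables. -/
def Str2.Sat {σ : Voc} (C : Str2 σ) : {V : Type} → (V → C.U) → Fml σ V → Prop
  | _, _, .tru => True
  | _, ρ, .atom r ts => C.ι r (ρ ∘ ts) = true
  | _, ρ, .not φ => ¬ C.Sat ρ φ
  | _, ρ, .or φ ψ => C.Sat ρ φ ∨ C.Sat ρ ψ
  | _, ρ, .ex φ => ∃ m : C.U, C.Sat (fun v => Option.elim v m ρ) φ
  | _, ρ, .tc φ a b =>
      Relation.TransGen
        (fun x y => C.Sat (fun v => Option.elim v y (fun v' => Option.elim v' x ρ)) φ)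
        (ρ a) (ρ b)

/-- Satisfaction of a closed formula. -/
def SatC {σ : Voc} (C : Str2 σ) (φ : Fml σ Empty) : Prop :=
  C.Sat (fun x => x.elim) φ

namespace Fml

def fls {σ : Voc} {V : Type} : Fml σ V := .not .tru

def and {σ : Voc} {V : Type} (φ ψ : Fml σ V) : Fml σ V := .not (.or (.not φ) (.not ψ))

def imp {σ : Voc} {V : Type} (φ ψ : Fml σ V) : Fml σ V := .or (.not φ) ψ

def all {σ : Voc} {V : Type} (φ : Fml σ (Option V)) : Fml σ V := .not (.ex (.not φ))

def conj {σ : Voc} {V : Type} (l : List (Fml σ V)) : Fml σ V := l.foldr .and .tru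

def disj {σ : Voc} {V : Type} (l : List (Fml σ V)) : Fml σ V := l.foldr .or .fls

/-- Renaming of free variables. -/
def map {σ : Voc} : {V W : Type} → (V → W) → Fml σ V → Fml σ W
  | _, _, _, .tru => .tru
  | _, _, g, .atom r ts => .atom r (g ∘ ts)
  | _, _, g, .not φ => .not (φ.map g)
  | _, _, g, .or φ ψ => .or (φ.map g) (ψ.map g)
  | _, _, g, .ex φ => .ex (φ.map (Option.map g))
  | _, _, g, .tc φ a b => .tc (φ.map (Option.map (Option.map g))) (g a) (g b)

end Fml

/-- The characteristic formula `p^B` of the truth value `B` for the predicate `p`: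
`p^0 := ¬p`, `p^1 := p`, `p^{1/2} := true`. -/
def charFml {σ : Voc} {V : Type} (p : σ.rel) (ts : Fin (σ.ar p) → V) : TV → Fml σ V
  | TV.zero => .not (.atom p ts)
  | TV.one => .atom p ts
  | TV.half => .tru

/-- `node` is a family of node formulas (one per node of `S`, with a single free
variable `w`) witnessing that `S` is FO-identifiable: for every 2-valued `C`
embedding into `S` via `f` and every concrete node `uh`, `f uh = u` iff `C`
satisfies `node u` under `[w ↦ uh]`. -/
def IsNodeFamily {σ : Voc} (S : Str3 σ) (node : S.U → Fml σ Unit) : Prop :=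
  ∀ (C : Str2 σ) (f : C.U → S.U), Embeds C S f →
    ∀ (uh : C.U) (u : S.U), f uh = u ↔ C.Sat (fun _ => uh) (node u)

/-- `S` is FO-identifiable. -/
def FOIdentifiable {σ : Voc} (S : Str3 σ) : Prop :=
  ∃ node : S.U → Fml σ Unit, IsNodeFamily S node

/-- Mutual exclusivity of a family of node formulas: in every 2-valued structure
that embeds into `S`, every concrete node satisfies at most one node formula. -/
def MutExcl {σ : Voc} (S : Str3 σ) (node : S.U → Fml σ Unit) : Prop :=
  ∀ C : Str2 σ, (∃ f : C.U → S.U, Embeds C S f) →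
    ∀ (uh : C.U) (u1 u2 : S.U), u1 ≠ u2 →
      ¬ (C.Sat (fun _ => uh) (node u1) ∧ C.Sat (fun _ => uh) (node u2))

/-- `S` is a bounded structure: any two distinct nodes are distinguished by a
unary predicate having distinct definite values on them. -/
def Bounded {σ : Voc} (S : Str3 σ) : Prop :=
  ∀ u1 u2 : S.U, u1 ≠ u2 →
    ∃ p : σ.rel, σ.ar p = 1 ∧
      S.ι p (fun _ => u1) ≠ S.ι p (fun _ => u2) ∧
      S.ι p (fun _ => u1) ≠ TV.half ∧ S.ι p (fun _ => u2) ≠ TV.half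

/-- The node formula `node^S_u(w) := ⋀_{p unary} p^{ι^S(p)(u)}(w)`. -/
noncomputable def boundedNode {σ : Voc} [Fintype σ.rel] (S : Str3 σ) (u : S.U) : Fml σ Unit :=
  Fml.conj
    (((Finset.univ : Finset {p : σ.rel // σ.ar p = 1}).toList).map
      (fun p => charFml p.1 (fun _ => ()) (S.ι p.1 (fun _ => u))))

/-- The conjunction `⋀_j node_{t j}(w_j)` over the components of a tuple of
abstract nodes, as a formula with free variables `w_1, …, w_n`. -/
def nodeTuple {σ : Voc} (S : Str3 σ) (node : S.U → Fml σ Unit) {n : ℕ}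
    (t : Fin n → S.U) : Fml σ (Fin n) :=
  Fml.conj (List.ofFn fun j : Fin n => (node (t j)).map (fun _ => j))

/-- Universal closure of a formula with `n` free variables. -/
def closeAll {σ : Voc} : {n : ℕ} → Fml σ (Fin n) → Fml σ Empty
  | 0, φ => φ.map Fin.elim0
  | _ + 1, φ =>
      closeAll (Fml.all (φ.map (fun i => Fin.lastCases none (fun j => some j) i)))

/-- Existential closure of a formula with `n` free variables. -/
def closeEx {σ : Voc} : {n : ℕ} → Fml σ (Fin n) → Fml σ Empty
  | 0, φ => φ.map Fin.elim0
  | _ + 1, φ =>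
      closeEx (Fml.ex (φ.map (fun i => Fin.lastCases none (fun j => some j) i)))

/-- `∃ v : node_u(v)`. -/
noncomputable def existsNode {σ : Voc} (S : Str3 σ) (node : S.U → Fml σ Unit) (u : S.U) :
    Fml σ Empty :=
  .ex ((node u).map (fun _ => (none : Option Empty)))

/-- The totality formula `∀ w : ⋁_i node_{u_i}(w)`. -/
noncomputable def xiTotal {σ : Voc} (S : Str3 σ) [Fintype S.U] (node : S.U → Fml σ Unit) :
    Fml σ Empty :=
  Fml.all (Fml.disj
    (((Finset.univ : Finset S.U).toList).map
      (fun u => (node u).map (fun _ => (none : Option Empty)))))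

/-- The nullary characteristic formula `⋀_{p nullary} p^{ι^S(p)()}`. -/
noncomputable def xiNullary {σ : Voc} [Fintype σ.rel] (S : Str3 σ) : Fml σ Empty :=
  Fml.conj
    (((Finset.univ : Finset σ.rel).toList).map (fun p =>
      if h : σ.ar p = 0 then
        charFml p (fun i => Fin.elim0 (Fin.cast h i))
          (S.ι p (fun i => Fin.elim0 (Fin.cast h i)))
      else .tru))

/-- The predicate characteristic formula
`∀ w1 … wr : ⋀_{tuples ū} ((⋀_j node_{ū j}(w_j)) → p^{ι^S(p)(ū)}(w̄))`. -/
noncomputable def xiPred {σ : Voc} (S : Str3 σ) [Fintype S.U] (node : S.U → Fml σ Unit)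
    (p : σ.rel) : Fml σ Empty :=
  closeAll (Fml.conj
    (((Finset.univ : Finset (Fin (σ.ar p) → S.U)).toList).map
      (fun t => Fml.imp (nodeTuple S node t)
        (charFml p (fun j => j) (S.ι p t)))))

/-- Conjunction of the predicate characteristic formulas over all predicates of
arity ≥ 1. -/
noncomputable def xiPredAll {σ : Voc} [Fintype σ.rel] (S : Str3 σ) [Fintype S.U]
    (node : S.U → Fml σ Unit) : Fml σ Empty :=
  Fml.conj
    (((Finset.univ : Finset σ.rel).toList).map (fun p =>
      if σ.ar p = 0 then .tru else xiPred S node p))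

/-- The first-order characteristic formula `ξ^S` of `S` (w.r.t. the node
formulas `node`). -/
noncomputable def xi {σ : Voc} [Fintype σ.rel] (S : Str3 σ) [Fintype S.U]
    (node : S.U → Fml σ Unit) : Fml σ Empty :=
  (Fml.conj (((Finset.univ : Finset S.U).toList).map (existsNode S node))).and
    ((xiTotal S node).and ((xiNullary S).and (xiPredAll S node)))

/-- The concretization `γ(S)`: the 2-valued structures that embed into `S` and
satisfy the integrity formula `F`. -/
def gammaSet {σ : Voc} (F : Fml σ Empty) (S : Str3 σ) : Set (Str2 σ) :=
  {C | (∃ f : C.U → S.U, Embeds C S f) ∧ SatC C F}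

/-- `S` is the canonical abstraction of the 2-valued structure `C` via `blur`:
`blur` is a surjective embedding that identifies exactly the concrete nodes with
equal canonical names (the values of the unary predicates), and every abstract
predicate value is the join of the concrete values it represents. -/
def IsCanonAbs {σ : Voc} (C : Str2 σ) (S : Str3 σ) (blur : C.U → S.U) : Prop :=
  Embeds C S blur ∧
    (∀ u v : C.U, blur u = blur v ↔
      ∀ p : σ.rel, σ.ar p = 1 → C.ι p (fun _ => u) = C.ι p (fun _ => v)) ∧
    ∀ (p : σ.rel) (t' : Fin (σ.ar p) → S.U),
      TV.IsJoin {b | ∃ t : Fin (σ.ar p) → C.U, blur ∘ t = t' ∧ C.tv p t = b}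
        (S.ι p t')

/-- `S` is an image of canonical abstraction. -/
def ICA {σ : Voc} (S : Str3 σ) : Prop :=
  ∃ (C : Str2 σ) (blur : C.U → S.U), IsCanonAbs C S blur

/-- The concretization of `S` under canonical abstraction. -/
def gammaC {σ : Voc} (F : Fml σ Empty) (S : Str3 σ) : Set (Str2 σ) :=
  {C | (∃ blur : C.U → S.U, IsCanonAbs C S blur) ∧ SatC C F}

/-- `node` is a family of node formulas witnessing canonical-FO-identifiability
of `S`. -/
def IsCanonNodeFamily {σ : Voc} (S : Str3 σ) (node : S.U → Fml σ Unit) : Prop :=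
  ∀ (C : Str2 σ) (blur : C.U → S.U), IsCanonAbs C S blur →
    ∀ (uh : C.U) (u : S.U), blur uh = u ↔ C.Sat (fun _ => uh) (node u)

/-- `τ^S[p]`: for every tuple where `p` has value 1/2, there are concrete
tuples (satisfying the node formulas) on which `p` holds, resp., fails. -/
noncomputable def tauPred {σ : Voc} (S : Str3 σ) [Fintype S.U] (node : S.U → Fml σ Unit)
    (p : σ.rel) : Fml σ Empty :=
  Fml.conj
    (((((Finset.univ : Finset (Fin (σ.ar p) → S.U)).toList).filter
        (fun t => decide (S.ι p t = TV.half))).map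
      (fun t =>
        (closeEx ((nodeTuple S node t).and (.atom p (fun j => j)))).and
          (closeEx ((nodeTuple S node t).and (.not (.atom p (fun j => j))))))))

/-- `τ^S := ξ^S ∧ ⋀_{p of arity ≥ 2} τ^S[p]`. -/
noncomputable def tau {σ : Voc} [Fintype σ.rel] (S : Str3 σ) [Fintype S.U]
    (node : S.U → Fml σ Unit) : Fml σ Empty :=
  (xi S node).and
    (Fml.conj (((Finset.univ : Finset σ.rel).toList).map (fun p =>
      if 2 ≤ σ.ar p then tauPred S node p else .tru)))

/-- Isomorphism of 3-valued structures. -/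
def Iso3 {σ : Voc} (S1 S2 : Str3 σ) : Prop :=
  ∃ e : S1.U ≃ S2.U,
    ∀ (p : σ.rel) (t : Fin (σ.ar p) → S1.U), S1.ι p t = S2.ι p (e ∘ t)

/-- Satisfaction of the NP (existential monadic second-order) characteristic
formula `ψ^S` of `S` in the 2-valued structure `C`: there exist sets `V_u`
(one per node `u` of `S`) that are nonempty, pairwise disjoint, and cover `C`,
such that the nullary and the predicate characteristic conjuncts hold with
`node_{u}(w) := w ∈ V_u`. -/
def SatNP {σ : Voc} (S : Str3 σ) (C : Str2 σ) : Prop :=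
  ∃ V : S.U → Set C.U,
    (∀ u : S.U, ∃ w, w ∈ V u) ∧
    (∀ u1 u2 : S.U, u1 ≠ u2 →
      ∀ w1 ∈ V u1, ∀ w2 ∈ V u2, ¬ C.ι σ.eqr (pair w1 w2) = true) ∧
    (∀ w : C.U, ∃ u : S.U, w ∈ V u) ∧
    (∀ (p : σ.rel) (h : σ.ar p = 0),
      TV.le (C.tv p (fun i => Fin.elim0 (Fin.cast h i)))
        (S.ι p (fun i => Fin.elim0 (Fin.cast h i)))) ∧
    (∀ (p : σ.rel), 1 ≤ σ.ar p →
      ∀ (t : Fin (σ.ar p) → C.U) (us : Fin (σ.ar p) → S.U),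
        (∀ j, t j ∈ V (us j)) → TV.le (C.tv p t) (S.ι p us))


lemma sat_and {σ : Voc} (C : Str2 σ) {V : Type} (ρ : V → C.U) (φ ψ : Fml σ V) :
    C.Sat ρ (φ.and ψ) ↔ C.Sat ρ φ ∧ C.Sat ρ ψ := by
  simp only [Fml.and, Str2.Sat]
  tauto

lemma sat_conj {σ : Voc} (C : Str2 σ) {V : Type} (ρ : V → C.U) (l : List (Fml σ V)) :
    C.Sat ρ (Fml.conj l) ↔ ∀ φ ∈ l, C.Sat ρ φ := by
  induction l with
  | nil => simp [Fml.conj, Str2.Sat]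
  | cons a l ih =>
      simp only [Fml.conj, List.foldr_cons]
      rw [show (List.foldr Fml.and Fml.tru l) = Fml.conj l from rfl] at *
      rw [sat_and, ih]
      simp

lemma tv_le_of_ne_half {a b : TV} (h : TV.le a b) (hb : b ≠ TV.half) : a = b := by
  cases h with
  | inl h => exact h
  | inr h => exact absurd h hb

/-- every bounded 3-valued structure is FO-identifiable with node
formulas `node^S_u(w) := ⋀_{p unary} p^{ι^S(p)(u)}(w)`. -/
theorem bounded_FOIdentifiable {σ : Voc} [Fintype σ.rel] (S : Str3 σ)
    (hb : Bounded S) : IsNodeFamily S (boundedNode S) := by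
  intro C f hEmb uh u
  unfold boundedNode
  rw [sat_conj]
  constructor
  · intro hfu φ hφ
    rw [List.mem_map] at hφ
    obtain ⟨p, -, rfl⟩ := hφ
    have hle := hEmb.2 p.1 (fun _ => uh)
    have hcomp : (f ∘ fun _ => uh) = (fun _ : Fin (σ.ar p.1) => u) := by
      funext i; simp [hfu]
    rw [hcomp] at hle
    rcases hv : S.ι p.1 (fun _ => u) with _ | _ | _
    · rw [hv] at hle
      have : C.tv p.1 (fun _ => uh) = TV.zero := tv_le_of_ne_half hle (by simp)
      unfold Str2.tv at this
      simp only [charFml, Str2.Sat]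
      intro hcontra
      rw [show ((fun _ => uh) ∘ (fun _ : Fin (σ.ar p.1) => ())) = (fun _ => uh) from rfl] at hcontra
      rw [hcontra] at this
      simp at this
    · exact trivial
    · rw [hv] at hle
      have : C.tv p.1 (fun _ => uh) = TV.one := tv_le_of_ne_half hle (by simp)
      unfold Str2.tv at this
      simp only [charFml, Str2.Sat]
      by_contra hcontra
      rw [show ((fun _ => uh) ∘ (fun _ : Fin (σ.ar p.1) => ())) = (fun _ => uh) from rfl] at hcontra
      rw [Bool.not_eq_true] at hcontra
      rw [hcontra] at this
      simp at this
  · intro hs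
    by_contra hne
    obtain ⟨p, hp1, hpd, hd1, hd2⟩ := hb (f uh) u hne
    have hmem : charFml p (fun _ : Fin (σ.ar p) => ()) (S.ι p (fun _ => u)) ∈
        ((Finset.univ : Finset {q : σ.rel // σ.ar q = 1}).toList).map
          (fun q => charFml q.1 (fun _ => ()) (S.ι q.1 (fun _ => u))) := by
      exact List.mem_map.mpr ⟨⟨p, hp1⟩, by simp, rfl⟩
    have hsat := hs _ hmem
    have hle := hEmb.2 p (fun _ => uh)
    have hcomp : (f ∘ fun _ => uh) = (fun _ : Fin (σ.ar p) => f uh) := rfl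
    rw [hcomp] at hle
    have htv : C.tv p (fun _ => uh) = S.ι p (fun _ => f uh) := tv_le_of_ne_half hle hd1
    rcases hv : S.ι p (fun _ => u) with _ | _ | _
    · rw [hv] at hsat
      simp only [charFml, Str2.Sat] at hsat
      rw [show ((fun _ => uh) ∘ (fun _ : Fin (σ.ar p) => ())) = (fun _ => uh) from rfl] at hsat
      rw [Bool.not_eq_true] at hsat
      unfold Str2.tv at htv
      rw [hsat] at htv
      simp at htv
      exact hpd (htv.symm.trans hv.symm)
    · exact hd2 hv
    · rw [hv] at hsat
      simp only [charFml, Str2.Sat] at hsat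
      rw [show ((fun _ => uh) ∘ (fun _ : Fin (σ.ar p) => ())) = (fun _ => uh) from rfl] at hsat
      unfold Str2.tv at htv
      rw [hsat] at htv
      simp at htv
      exact hpd (by rw [← htv, hv])
end HeapAbs
end

section
/- Every 3-valued structure S that is an image of canonical abstraction (ICA) is canonical-FO-identifiable, with node formulas node^S_{u_i}(w) defined as the conjunction over all unary predicates p of the characteristic formula p^{ι^S(p)(u_i)}(w). -/
/-!
Common framework: 2-valued and 3-valued logical structures over a relational
vocabulary with a designated binary equality predicate, embedding, first-order
formulas with transitive closure and their Tarskian semantics, characteristic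
formulas, canonical abstraction.
-/

namespace HeapAbs

lemma sat_charFml {σ : Voc} (C : Str2 σ) {V : Type} (ρ : V → C.U) (p : σ.rel)
    (ts : Fin (σ.ar p) → V) (B : TV) :
    C.Sat ρ (charFml p ts B) ↔ TV.le (C.tv p (ρ ∘ ts)) B := by
  cases B <;> cases hb : C.ι p (ρ ∘ ts) <;>
    simp [charFml, Str2.Sat, Str2.tv, TV.le, hb]

lemma tv_eq_iff {σ : Voc} (C : Str2 σ) (p : σ.rel) (t1 t2 : Fin (σ.ar p) → C.U)
    (h : C.tv p t1 = C.tv p t2) : C.ι p t1 = C.ι p t2 := by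
  unfold Str2.tv at h
  cases h1 : C.ι p t1 <;> cases h2 : C.ι p t2 <;> simp_all

/-- every ICA structure is canonical-FO-identifiable with node
formulas `node^S_u(w) := ⋀_{p unary} p^{ι^S(p)(u)}(w)`. -/
theorem ICA_canonically_FOIdentifiable {σ : Voc} [Fintype σ.rel] (S : Str3 σ)
    (h : ICA S) : IsCanonNodeFamily S (boundedNode S) := by
  intro C blur hca uh u
  obtain ⟨⟨hsurj, hemb⟩, hname, hjoin⟩ := hca
  have keysat : C.Sat (fun _ => uh) (boundedNode S u) ↔
      ∀ p : σ.rel, σ.ar p = 1 →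
        TV.le (C.tv p (fun _ => uh)) (S.ι p (fun _ => u)) := by
    rw [boundedNode, sat_conj]
    constructor
    · intro hall p hp
      have := hall (charFml p (fun _ => ()) (S.ι p (fun _ => u)))
        (by
          simp only [List.mem_map]
          exact ⟨⟨p, hp⟩, by simp, rfl⟩)
      rw [sat_charFml] at this
      exact this
    · intro hall φ hφ
      simp only [List.mem_map] at hφ
      obtain ⟨⟨p, hp⟩, -, rfl⟩ := hφ
      rw [sat_charFml]
      exact hall p hp
  rw [keysat]
  constructor
  · intro huh p hp
    have := hemb p (fun _ => uh)
    have hc : (blur ∘ fun _ => uh) = (fun _ : Fin (σ.ar p) => u) := by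
      funext j; simp [Function.comp, huh]
    rwa [hc] at this
  · intro hall
    obtain ⟨vh, hvh⟩ := hsurj u
    have key : ∀ p : σ.rel, σ.ar p = 1 →
        C.ι p (fun _ => uh) = C.ι p (fun _ => vh) := by
      intro p hp
      set A := S.ι p (fun _ => u) with hA
      have hjp := hjoin p (fun _ => u)
      rw [← hA] at hjp
      by_cases hhalf : A = TV.half
      · -- derive a contradiction: unary predicates can't be half on abstract nodes
        exfalso
        have hzero : TV.zero ∈ {b | ∃ t : Fin (σ.ar p) → C.U,
            blur ∘ t = (fun _ => u) ∧ C.tv p t = b} := by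
          by_contra hz
          have hub : ∀ a ∈ {b | ∃ t : Fin (σ.ar p) → C.U,
              blur ∘ t = (fun _ => u) ∧ C.tv p t = b}, TV.le a TV.one := by
            intro a ha
            have : a ≠ TV.zero := fun h => hz (h ▸ ha)
            obtain ⟨t, -, ht⟩ := ha
            unfold Str2.tv at ht
            cases hb : C.ι p t <;> simp [hb] at ht <;> subst ht
            · exact absurd rfl this
            · exact Or.inl rfl
          have := hjp.2 TV.one hub
          rw [hhalf] at this
          rcases this with h | h <;> exact TV.noConfusion h
        have hone : TV.one ∈ {b | ∃ t : Fin (σ.ar p) → C.U,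
            blur ∘ t = (fun _ => u) ∧ C.tv p t = b} := by
          by_contra hz
          have hub : ∀ a ∈ {b | ∃ t : Fin (σ.ar p) → C.U,
              blur ∘ t = (fun _ => u) ∧ C.tv p t = b}, TV.le a TV.zero := by
            intro a ha
            have : a ≠ TV.one := fun h => hz (h ▸ ha)
            obtain ⟨t, -, ht⟩ := ha
            unfold Str2.tv at ht
            cases hb : C.ι p t <;> simp [hb] at ht <;> subst ht
            · exact Or.inl rfl
            · exact absurd rfl this
          have := hjp.2 TV.zero hub
          rw [hhalf] at this
          rcases this with h | h <;> exact TV.noConfusion h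
        obtain ⟨t0, hbt0, ht0⟩ := hzero
        obtain ⟨t1, hbt1, ht1⟩ := hone
        have hpos : 0 < σ.ar p := by omega
        set i : Fin (σ.ar p) := ⟨0, hpos⟩ with hi
        have hsub : ∀ j : Fin (σ.ar p), j = i := by
          intro j; apply Fin.ext; have := j.isLt; omega
        have ht0e : t0 = (fun _ => t0 i) := by funext j; rw [hsub j]
        have ht1e : t1 = (fun _ => t1 i) := by funext j; rw [hsub j]
        have hb0 : blur (t0 i) = u := congrFun hbt0 i
        have hb1 : blur (t1 i) = u := congrFun hbt1 i
        have := (hname (t0 i) (t1 i)).1 (hb0.trans hb1.symm) p hp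
        rw [← ht0e, ← ht1e] at this
        unfold Str2.tv at ht0 ht1
        rw [this] at ht0
        rw [ht0] at ht1
        exact TV.noConfusion ht1
      · have h1 : C.tv p (fun _ => uh) = A := by
          rcases hall p hp with h | h
          · exact h
          · exact absurd h hhalf
        have hmem : C.tv p (fun _ => vh) ∈ {b | ∃ t : Fin (σ.ar p) → C.U,
            blur ∘ t = (fun _ => u) ∧ C.tv p t = b} := by
          exact ⟨fun _ => vh, by funext j; simp [Function.comp, hvh], rfl⟩
        have h2 : C.tv p (fun _ => vh) = A := by
          rcases hjp.1 _ hmem with h | h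
          · exact h
          · exact absurd h hhalf
        exact tv_eq_iff C p _ _ (h1.trans h2.symm)
    have : blur uh = blur vh := (hname uh vh).2 key
    rw [this, hvh]
end HeapAbs
end

section
/- Let S be an ICA structure with nodes u1,...,un, and suppose the formulas node^S_{u_i}(w) used in γ̂_c(S) are arbitrary formulas with free variable w satisfying the mutual-exclusivity property (each node of any embedded 2-valued structure satisfies at most one node formula). Then for every 2-valued structure S♮ with S♮ ⊨ γ̂_c(S), the structure S is the canonical abstraction of S♮. -/
/-!
Common framework: 2-valued and 3-valued logical structures over a relational
vocabulary with a designated binary equality predicate, embedding, first-order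
formulas with transitive closure and their Tarskian semantics, characteristic
formulas, canonical abstraction.
-/

namespace HeapAbs

/-!
The equality conjunct of `ξ^S` forces the node formulas to be mutually exclusive in any
2-valued model (`eq` is 0 between distinct abstract nodes and is true equality in the model),
so together with totality they define a map `blur`, which the existence and predicate conjuncts
make a surjective embedding. An ICA structure is bounded and its nullary and unary predicates are
definite, so `blur` identifies exactly the nodes with equal canonical names. A definite abstract
value is the join of the concrete values because the embedding forces them all to equal it; a
value 1/2 occurs only at arity ≥ 2, where `τ^S` supplies concrete tuples with both values.
-/

theorem TV.le_half (a : TV) : TV.le a TV.half := Or.inr rfl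

theorem TV.le_antisymm {a b : TV} (hab : TV.le a b) (hba : TV.le b a) : a = b := by
  rcases hab with h | rfl
  · exact h
  · rcases hba with h | rfl
    exacts [h.symm, rfl]

theorem TV.IsJoin.unique {A : Set TV} {v w : TV} (hv : TV.IsJoin A v) (hw : TV.IsJoin A w) :
    v = w :=
  TV.le_antisymm (hv.2 w hw.1) (hw.2 v hv.1)

theorem TV.isJoin_of_forall_eq {A : Set TV} {b : TV} (hb : b ∈ A) (hA : ∀ a ∈ A, a = b) :
    TV.IsJoin A b :=
  ⟨fun a ha => Or.inl (hA a ha), fun _ hw => hw b hb⟩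

theorem TV.isJoin_half {A : Set TV} (h1 : TV.one ∈ A) (h0 : TV.zero ∈ A) :
    TV.IsJoin A TV.half := by
  refine ⟨fun a _ => TV.le_half a, fun w hw => ?_⟩
  rcases hw _ h1 with rfl | rfl
  · rcases hw _ h0 with h | h <;> cases h
  · exact Or.inl rfl

theorem tuple_eq_of_eq_zero {α : Type _} {n : ℕ} (hn : n = 0) (s t : Fin n → α) : s = t :=
  funext fun i => absurd i.isLt (by omega)

theorem tuple_eq_const_of_eq_one {α : Type _} {n : ℕ} (hn : n = 1) (t : Fin n → α) :
    t = fun _ => t ⟨0, by omega⟩ :=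
  funext fun i => congrArg t (Fin.ext (by omega))

namespace Str2

variable {σ : Voc} (C : Str2 σ)

theorem tv_ne_half (r : σ.rel) (t : Fin (σ.ar r) → C.U) : C.tv r t ≠ TV.half := by
  unfold Str2.tv; split <;> decide

theorem tv_eq_tv_iff {r : σ.rel} {s t : Fin (σ.ar r) → C.U} :
    C.tv r s = C.tv r t ↔ C.ι r s = C.ι r t := by
  unfold Str2.tv; cases C.ι r s <;> cases C.ι r t <;> decide

theorem sat_and {V : Type} (ρ : V → C.U) (φ ψ : Fml σ V) :
    C.Sat ρ (φ.and ψ) ↔ C.Sat ρ φ ∧ C.Sat ρ ψ := by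
  simp only [Fml.and, Str2.Sat]
  tauto

theorem sat_imp {V : Type} (ρ : V → C.U) (φ ψ : Fml σ V) :
    C.Sat ρ (φ.imp ψ) ↔ (C.Sat ρ φ → C.Sat ρ ψ) := by
  simp only [Fml.imp, Str2.Sat]
  tauto

theorem sat_all {V : Type} (ρ : V → C.U) (φ : Fml σ (Option V)) :
    C.Sat ρ (Fml.all φ) ↔ ∀ m : C.U, C.Sat (fun v => Option.elim v m ρ) φ := by
  simp only [Fml.all, Str2.Sat, not_exists, not_not]

theorem sat_conj {V : Type} (ρ : V → C.U) (l : List (Fml σ V)) :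
    C.Sat ρ (Fml.conj l) ↔ ∀ φ ∈ l, C.Sat ρ φ := by
  induction l with
  | nil => simp [Fml.conj, Str2.Sat]
  | cons φ l ih => simp [Fml.conj, sat_and, ← ih]

theorem sat_disj {V : Type} (ρ : V → C.U) (l : List (Fml σ V)) :
    C.Sat ρ (Fml.disj l) ↔ ∃ φ ∈ l, C.Sat ρ φ := by
  induction l with
  | nil => simp [Fml.disj, Fml.fls, Str2.Sat]
  | cons φ l ih => simp [Fml.disj, Str2.Sat, ← ih]

theorem sat_conj_univ {α : Type} [Fintype α] {V : Type} (ρ : V → C.U) (g : α → Fml σ V) :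
    C.Sat ρ (Fml.conj ((Finset.univ : Finset α).toList.map g)) ↔ ∀ a, C.Sat ρ (g a) := by
  simp [sat_conj]

theorem sat_disj_univ {α : Type} [Fintype α] {V : Type} (ρ : V → C.U) (g : α → Fml σ V) :
    C.Sat ρ (Fml.disj ((Finset.univ : Finset α).toList.map g)) ↔ ∃ a, C.Sat ρ (g a) := by
  simp [sat_disj]

theorem sat_map : ∀ {V W : Type} (g : V → W) (ρ : W → C.U) (φ : Fml σ V),
    C.Sat ρ (φ.map g) ↔ C.Sat (ρ ∘ g) φ
  | _, _, _, _, .tru => Iff.rfl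
  | _, _, _, _, .atom _ _ => Iff.rfl
  | _, _, g, ρ, .not φ => not_congr (sat_map g ρ φ)
  | _, _, g, ρ, .or φ ψ => or_congr (sat_map g ρ φ) (sat_map g ρ ψ)
  | _, _, g, ρ, .ex φ => exists_congr fun m =>
      (sat_map _ _ φ).trans
        (Iff.of_eq (congrArg (C.Sat · φ) (funext fun v => by cases v <;> rfl)))
  | _, _, g, ρ, .tc φ a b => by
      have hrel : ∀ x y : C.U, C.Sat (fun v => Option.elim v y (fun v' => Option.elim v' x ρ))
            (φ.map (Option.map (Option.map g))) ↔
          C.Sat (fun v => Option.elim v y (fun v' => Option.elim v' x (ρ ∘ g))) φ := fun x y =>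
        (sat_map _ _ φ).trans (Iff.of_eq (congrArg (C.Sat · φ) (funext fun v => by
          rcases v with _ | _ | _ <;> rfl)))
      simp only [Fml.map, Str2.Sat, hrel]
      rfl

theorem sat_charFml {V : Type} (ρ : V → C.U) (p : σ.rel) (ts : Fin (σ.ar p) → V) (b : TV) :
    C.Sat ρ (charFml p ts b) ↔ TV.le (C.tv p (ρ ∘ ts)) b := by
  cases b <;> cases h : C.ι p (ρ ∘ ts) <;> simp [charFml, Str2.Sat, Str2.tv, TV.le, h]

theorem elim_comp_lastCases {n : ℕ} (ρ : Fin n → C.U) (m : C.U) :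
    (fun v => Option.elim v m ρ) ∘ (fun i : Fin (n + 1) => Fin.lastCases none some i) =
      Fin.snoc ρ m := by
  funext i
  induction i using Fin.lastCases <;> simp

theorem satC_closeAll {n : ℕ} (φ : Fml σ (Fin n)) :
    SatC C (closeAll φ) ↔ ∀ ρ : Fin n → C.U, C.Sat ρ φ := by
  induction n with
  | zero =>
    refine (sat_map C _ _ φ).trans ⟨fun h ρ => ?_, fun h => h _⟩
    rwa [tuple_eq_of_eq_zero rfl ρ]
  | succ n ih =>
    simp only [closeAll, ih, sat_all, sat_map, elim_comp_lastCases]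
    exact ⟨fun h ρ => Fin.snoc_init_self ρ ▸ h _ _, fun h _ _ => h _⟩

theorem satC_closeEx {n : ℕ} (φ : Fml σ (Fin n)) :
    SatC C (closeEx φ) ↔ ∃ ρ : Fin n → C.U, C.Sat ρ φ := by
  induction n with
  | zero =>
    refine (sat_map C _ _ φ).trans ⟨fun h => ⟨_, h⟩, fun ⟨ρ, hρ⟩ => ?_⟩
    rwa [tuple_eq_of_eq_zero rfl ρ] at hρ
  | succ n ih =>
    simp only [closeEx, ih, Str2.Sat, sat_map, elim_comp_lastCases]
    exact ⟨fun ⟨_, _, h⟩ => ⟨_, h⟩,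
      fun ⟨ρ, h⟩ => ⟨_, _, (Fin.snoc_init_self ρ).symm ▸ h⟩⟩

theorem sat_nodeTuple {S : Str3 σ} (node : S.U → Fml σ Unit) {n : ℕ} (t : Fin n → S.U)
    (ρ : Fin n → C.U) :
    C.Sat ρ (nodeTuple S node t) ↔ ∀ j, C.Sat (fun _ => ρ j) (node (t j)) := by
  simp only [nodeTuple, sat_conj, List.forall_mem_ofFn_iff, sat_map]
  rfl

end Str2

section CharacteristicFormulas

open Str2

variable {σ : Voc} {S : Str3 σ} (node : S.U → Fml σ Unit) (C : Str2 σ)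

theorem satC_existsNode_iff (u : S.U) :
    SatC C (existsNode S node u) ↔ ∃ w, C.Sat (fun _ => w) (node u) := by
  simp only [SatC, existsNode, Str2.Sat, sat_map]
  rfl

theorem satC_xiTotal_iff [Fintype S.U] :
    SatC C (xiTotal S node) ↔ ∀ w, ∃ u, C.Sat (fun _ => w) (node u) := by
  simp only [SatC, xiTotal, sat_all, sat_disj_univ, sat_map]
  rfl

theorem satC_xiPred_iff [Fintype S.U] (p : σ.rel) :
    SatC C (xiPred S node p) ↔ ∀ (t : Fin (σ.ar p) → S.U) (ρ : Fin (σ.ar p) → C.U),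
      (∀ j, C.Sat (fun _ => ρ j) (node (t j))) → TV.le (C.tv p ρ) (S.ι p t) := by
  simp only [xiPred, satC_closeAll, sat_conj_univ, sat_imp, sat_nodeTuple, sat_charFml]
  exact forall_comm

theorem satC_xiNullary_iff [Fintype σ.rel] :
    SatC C (xiNullary S) ↔ ∀ p, σ.ar p = 0 →
      ∀ (t : Fin (σ.ar p) → C.U) (t' : Fin (σ.ar p) → S.U),
        TV.le (C.tv p t) (S.ι p t') := by
  simp only [SatC, xiNullary, sat_conj_univ]
  refine forall_congr' fun p => ⟨fun h hp t t' => ?_, fun h => ?_⟩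
  · rw [dif_pos hp, sat_charFml] at h
    rwa [tuple_eq_of_eq_zero hp t, tuple_eq_of_eq_zero hp t']
  · split_ifs with hp
    · exact (sat_charFml C _ _ _ _).mpr (h hp _ _)
    · trivial

theorem satC_xiPredAll_iff [Fintype σ.rel] [Fintype S.U] :
    SatC C (xiPredAll S node) ↔ ∀ p, σ.ar p ≠ 0 → SatC C (xiPred S node p) := by
  simp only [SatC, xiPredAll, sat_conj_univ]
  refine forall_congr' fun p => ?_
  split_ifs with hp <;> simp [hp, Str2.Sat]

theorem satC_tauPred_iff [Fintype S.U] (p : σ.rel) :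
    SatC C (tauPred S node p) ↔ ∀ t : Fin (σ.ar p) → S.U, S.ι p t = TV.half →
      (∃ ρ, (∀ j, C.Sat (fun _ => ρ j) (node (t j))) ∧ C.ι p ρ = true) ∧
      (∃ ρ, (∀ j, C.Sat (fun _ => ρ j) (node (t j))) ∧ C.ι p ρ = false) := by
  unfold tauPred
  rw [SatC, sat_conj]
  simp only [List.forall_mem_map, List.mem_filter, Finset.mem_toList, Finset.mem_univ, true_and,
    decide_eq_true_eq, sat_and]
  change (∀ t, _ → SatC C _ ∧ SatC C _) ↔ _
  simp only [satC_closeEx, sat_and, sat_nodeTuple, Str2.Sat, Bool.not_eq_true, Function.comp_def]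

end CharacteristicFormulas

theorem eq_of_sat_node_of_satC_xiPred {σ : Voc} {S : Str3 σ} [Fintype S.U]
    {node : S.U → Fml σ Unit} {C : Str2 σ} (h : SatC C (xiPred S node σ.eqr)) {w : C.U}
    {u1 u2 : S.U} (h1 : C.Sat (fun _ => w) (node u1)) (h2 : C.Sat (fun _ => w) (node u2)) :
    u1 = u2 := by
  by_contra hne
  have hle := (satC_xiPred_iff node C σ.eqr).mp h (pair u1 u2) (pair w w) fun j => by
    unfold pair; split_ifs
    exacts [h1, h2]
  rw [S.eq_ne u1 u2 hne] at hle
  have hww : C.ι σ.eqr (pair w w) = true := (C.eq_iff w w).mpr rfl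
  simp [TV.le, Str2.tv, hww] at hle

theorem exists_embeds_of_satC_xi {σ : Voc} [Fintype σ.rel] {S : Str3 σ} [Fintype S.U]
    (node : S.U → Fml σ Unit) (C : Str2 σ) (h : SatC C (xi S node)) :
    ∃ f : C.U → S.U, Embeds C S f ∧ ∀ w u, f w = u ↔ C.Sat (fun _ => w) (node u) := by
  obtain ⟨hex, htot, hnull, hpred⟩ : (∀ u, SatC C (existsNode S node u)) ∧
      SatC C (xiTotal S node) ∧ SatC C (xiNullary S) ∧ SatC C (xiPredAll S node) := by
    simpa only [xi, SatC, Str2.sat_and, Str2.sat_conj_univ] using h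
  simp only [satC_existsNode_iff] at hex
  rw [satC_xiNullary_iff] at hnull
  rw [satC_xiPredAll_iff] at hpred
  choose f hf using (satC_xiTotal_iff node C).mp htot
  have hchar : ∀ w u, f w = u ↔ C.Sat (fun _ => w) (node u) := fun w u =>
    ⟨fun hu => hu ▸ hf w,
      eq_of_sat_node_of_satC_xiPred (hpred σ.eqr (by rw [σ.eq_ar]; omega)) (hf w)⟩
  refine ⟨f, ⟨fun u => ?_, fun r t => ?_⟩, hchar⟩
  · obtain ⟨w, hw⟩ := hex u
    exact ⟨w, (hchar w u).mpr hw⟩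
  · by_cases hr : σ.ar r = 0
    · exact hnull r hr t _
    · exact (satC_xiPred_iff node C r).mp (hpred r hr) _ t fun j => hf (t j)

section CanonicalAbstraction

variable {σ : Voc} {C : Str2 σ} {S : Str3 σ} {f : C.U → S.U}

theorem Embeds.tv_eq (hf : Embeds C S f) {r : σ.rel} {t : Fin (σ.ar r) → C.U}
    (h : S.ι r (f ∘ t) ≠ TV.half) : C.tv r t = S.ι r (f ∘ t) :=
  (hf.2 r t).resolve_right h

theorem Embeds.eq_iff_unary_eq (hf : Embeds C S f) (hbdd : Bounded S)
    (hunary : ∀ p, σ.ar p = 1 → ∀ u : S.U, S.ι p (fun _ => u) ≠ TV.half) (v w : C.U) :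
    f v = f w ↔ ∀ p, σ.ar p = 1 → C.ι p (fun _ => v) = C.ι p (fun _ => w) := by
  have hval : ∀ p x, S.ι p (fun _ => f x) ≠ TV.half →
      C.tv p (fun _ => x) = S.ι p (fun _ => f x) := fun _ _ hx => hf.tv_eq hx
  refine ⟨fun hvw p hp => ?_, fun hname => ?_⟩
  · rw [← C.tv_eq_tv_iff, hval p v (hunary p hp _), hval p w (hunary p hp _), hvw]
  · by_contra hne
    obtain ⟨p, hp, hpne, hv, hw⟩ := hbdd _ _ hne
    apply hpne
    rw [← hval p v hv, ← hval p w hw, C.tv_eq_tv_iff]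
    exact hname p hp

theorem Embeds.isJoin (hf : Embeds C S f) (p : σ.rel) (t' : Fin (σ.ar p) → S.U)
    (hhalf : S.ι p t' = TV.half →
      (∃ t, f ∘ t = t' ∧ C.ι p t = true) ∧ (∃ t, f ∘ t = t' ∧ C.ι p t = false)) :
    TV.IsJoin {b | ∃ t : Fin (σ.ar p) → C.U, f ∘ t = t' ∧ C.tv p t = b} (S.ι p t') := by
  by_cases ht' : S.ι p t' = TV.half
  · obtain ⟨⟨t1, ht1, h1⟩, ⟨t0, ht0, h0⟩⟩ := hhalf ht'
    rw [ht']
    exact TV.isJoin_half ⟨t1, ht1, by simp [Str2.tv, h1]⟩ ⟨t0, ht0, by simp [Str2.tv, h0]⟩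
  · obtain ⟨t, rfl⟩ := hf.1.comp_left t'
    exact TV.isJoin_of_forall_eq ⟨t, rfl, hf.tv_eq ht'⟩ fun _ ⟨s, hs, hb⟩ =>
      hb ▸ hs ▸ hf.tv_eq (hs ▸ ht')

theorem isCanonAbs_of_embeds (hf : Embeds C S f) (hbdd : Bounded S)
    (hunary : ∀ p, σ.ar p = 1 → ∀ u : S.U, S.ι p (fun _ => u) ≠ TV.half)
    (hhalf : ∀ p (t' : Fin (σ.ar p) → S.U), S.ι p t' = TV.half →
      (∃ t, f ∘ t = t' ∧ C.ι p t = true) ∧ (∃ t, f ∘ t = t' ∧ C.ι p t = false)) :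
    IsCanonAbs C S f :=
  ⟨hf, hf.eq_iff_unary_eq hbdd hunary, fun p t' => hf.isJoin p t' (hhalf p t')⟩

theorem IsCanonAbs.ι_eq_tv_of_ar_lt_two (h : IsCanonAbs C S f) {p : σ.rel} (hp : σ.ar p < 2)
    (t : Fin (σ.ar p) → C.U) :
    S.ι p (f ∘ t) = C.tv p t := by
  refine (h.2.2 p _).unique (TV.isJoin_of_forall_eq ⟨t, rfl, rfl⟩ ?_)
  rintro _ ⟨s, hs, rfl⟩
  obtain h0 | h1 : σ.ar p = 0 ∨ σ.ar p = 1 := by omega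
  · rw [tuple_eq_of_eq_zero h0 s t]
  · rw [tuple_eq_const_of_eq_one h1 s, tuple_eq_const_of_eq_one h1 t, C.tv_eq_tv_iff]
    exact (h.2.1 _ _).mp (congrFun hs _) p h1

theorem IsCanonAbs.ι_ne_half_of_ar_lt_two (h : IsCanonAbs C S f) {p : σ.rel} (hp : σ.ar p < 2)
    (t' : Fin (σ.ar p) → S.U) :
    S.ι p t' ≠ TV.half := by
  obtain ⟨t, rfl⟩ := h.1.1.comp_left t'
  rw [h.ι_eq_tv_of_ar_lt_two hp]
  exact C.tv_ne_half p t

theorem IsCanonAbs.bounded (h : IsCanonAbs C S f) : Bounded S := by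
  intro u1 u2 hne
  obtain ⟨w1, rfl⟩ := h.1.1 u1
  obtain ⟨w2, rfl⟩ := h.1.1 u2
  obtain ⟨p, hp, hpne⟩ :
      ∃ p, σ.ar p = 1 ∧ C.ι p (fun _ => w1) ≠ C.ι p (fun _ => w2) := by
    by_contra! hall
    exact hne ((h.2.1 w1 w2).mpr hall)
  have hval : ∀ w, S.ι p (fun _ => f w) = C.tv p (fun _ => w) := fun w =>
    h.ι_eq_tv_of_ar_lt_two (by omega) _
  refine ⟨p, hp, ?_, ?_, ?_⟩
  · rwa [hval, hval, Ne, C.tv_eq_tv_iff]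
  · exact hval w1 ▸ C.tv_ne_half p _
  · exact hval w2 ▸ C.tv_ne_half p _

end CanonicalAbstraction

theorem sat_gammaHatC_canonAbs_general {σ : Voc} [Fintype σ.rel] (F : Fml σ Empty)
    (S : Str3 σ) [Fintype S.U] (hICA : ICA S)
    (node : S.U → Fml σ Unit)
    (C : Str2 σ) (h : SatC C (F.and (tau S node))) :
    ∃ blur : C.U → S.U, IsCanonAbs C S blur := by
  obtain ⟨C0, blur0, hS⟩ := hICA
  obtain ⟨-, hxi, htau⟩ : SatC C F ∧ SatC C (xi S node) ∧
      ∀ p, SatC C (if 2 ≤ σ.ar p then tauPred S node p else .tru) := by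
    simpa only [tau, SatC, Str2.sat_and, Str2.sat_conj_univ] using h
  obtain ⟨f, hf, hnode⟩ := exists_embeds_of_satC_xi node C hxi
  refine ⟨f, isCanonAbs_of_embeds hf hS.bounded
    (fun p hp _ => hS.ι_ne_half_of_ar_lt_two (by omega) _) fun p t' ht' => ?_⟩
  have hp : 2 ≤ σ.ar p := by
    by_contra hp
    exact hS.ι_ne_half_of_ar_lt_two (by omega) t' ht'
  have htauP := htau p
  rw [if_pos hp, satC_tauPred_iff] at htauP
  simpa only [← hnode, ← funext_iff, Function.comp_def] using htauP t' ht'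

/-- for an ICA structure `S` whose node formulas are arbitrary
formulas satisfying the mutual-exclusivity property, every 2-valued structure
satisfying `γ̂_c(S) = F ∧ τ^S` has `S` as its canonical abstraction. -/
theorem sat_gammaHatC_canonAbs {σ : Voc} [Fintype σ.rel] (F : Fml σ Empty)
    (S : Str3 σ) [Fintype S.U] (hICA : ICA S)
    (node : S.U → Fml σ Unit) (hmut : MutExcl S node)
    (C : Str2 σ) (h : SatC C (F.and (tau S node))) :
    ∃ blur : C.U → S.U, IsCanonAbs C S blur :=
  sat_gammaHatC_canonAbs_general F S hICA node C h

end HeapAbs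
end
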